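/- Suppose Assumption 1 holds: Σ_{r=0}^∞ sup_{τ∈ℤ} (ξ_{τ,r}² σ_{τ−r}²) < ∞ and for every t ∈ ℤ the series μ_t := Σ_{r=0}^∞ ξ_{t,r} φ_0(t−r) converges. For each t let Y_t = μ_t + Z_t, where Z_t is the L² limit of the partial sums Σ_{r=0}^{n} ξ_{t,r} ε_{t−r}. Then for every t ∈ ℤ and every integer N ≥ 1, the autocovariances satisfy the recursion Cov(Y_t, Y_{t−N}) = ξ_{t,N} Var(Y_{t−N}) + Σ_{m=1}^{p−1} Σ_{i=1}^{p−m} φ_{m+i}(t−N+i) ξ_{t,N−i} Cov(Y_{t−N}, Y_{t−N−m}). -/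

import Mathlib

open Finset

/-- The `k × k` solution matrix `Φ_{t,k}`: its (1-based) `(i,j)` entry is `-1` if `i = j-1`,
`φ_{1+i−j}(t−k+i)` if `0 ≤ i−j ≤ p−1`, and `0` otherwise. -/
noncomputable def PhiMat (p : ℕ) (φ : ℕ → ℤ → ℝ) (t : ℤ) (k : ℕ) :
    Matrix (Fin k) (Fin k) ℝ :=
  fun i j =>
    if (i : ℕ) + 1 = (j : ℕ) then -1
    else if (j : ℕ) ≤ (i : ℕ) ∧ (i : ℕ) - (j : ℕ) + 1 ≤ p then
      φ ((i : ℕ) - (j : ℕ) + 1) (t - (k : ℤ) + (i : ℕ) + 1)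
    else 0

/-- The Hessenbergian (Green function) `ξ_{t,k} = det Φ_{t,k}`, with the conventions
`ξ_{t,0} = 1` (empty determinant) and `ξ_{t,k} = 0` for `k < 0`. -/
noncomputable def xi (p : ℕ) (φ : ℕ → ℤ → ℝ) (t : ℤ) (k : ℤ) : ℝ :=
  if 0 ≤ k then (PhiMat p φ t k.toNat).det else 0

open MeasureTheory Filter

open scoped InnerProductSpace Topology

/-!
Expanding `det Φ_{t,k}` along its first column shows that `k ↦ ξ_{t,k}` solves
`x_k = [k = 0] + ∑_{j=1}^p φ_j(t-k+j) x_{k-j}`. Write `A_m = ∑_{i=1}^{p-m} φ_{m+i}(t-N+i) ξ_{t,N-i}`.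
For `s ≥ 1`, expanding both sides of `ξ_{t,N+s} = ξ_{t,N} ξ_{t-N,s} + ∑_{m=1}^{p-1} A_m ξ_{t-N-m,s-m}`
by this recursion, the expansions differ only by the terms `j > s` on the left, which add up to `A_s`,
exactly the inhomogeneous term on the right; so the identity follows by induction on `s`.

Summed against the noise, it gives for `S_t(n) = ∑_{r<n} ξ_{t,r} ε_{t-r}`
`S_t(N+K) = S_t(N) + ξ_{t,N} S_{t-N}(K) + ∑_m A_m S_{t-N-m}(K-m)`, hence, in `L²`,
`Z_t = S_t(N) + ξ_{t,N} Z_{t-N} + ∑_m A_m Z_{t-N-m}`. Martingale differences are orthogonal and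
centred, so `S_t(N)`, built from `ε_{t-N+1}, …, ε_t`, is orthogonal to `Z_{t-N}`, and `Y_t - E Y_t = Z_t`.
Pairing the decomposition with `Z_{t-N}` gives the recursion.
-/

lemma Finset.sum_Icc_one_eq_sum_range {M : Type*} [AddCommMonoid M] (f : ℕ → M) (n : ℕ) :
    ∑ j ∈ Icc 1 n, f j = ∑ a ∈ range n, f (a + 1) := by
  rw [range_eq_Ico, sum_Ico_add' f 0 n 1]
  rfl

lemma Finset.sum_range_eq_sum_range_of_eq_zero {M : Type*} [AddCommMonoid M] {f : ℕ → M}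
    {m n : ℕ} (hm : ∀ a, m ≤ a → f a = 0) (hn : ∀ a, n ≤ a → f a = 0) :
    ∑ a ∈ range m, f a = ∑ a ∈ range n, f a := by
  wlog h : m ≤ n generalizing m n
  · exact (this hn hm (by omega)).symm
  exact Finset.sum_subset (range_subset_range.2 h) fun a _ ha => hm a (by simpa using ha)

lemma Finset.sum_range_eq_sum_range_sub {M : Type*} [AddCommMonoid M] {f : ℕ → M} {m : ℕ}
    (hf : ∀ s < m, f s = 0) (K : ℕ) :
    ∑ s ∈ range K, f s = ∑ s ∈ range (K - m), f (m + s) := by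
  rw [← Finset.sum_Ico_eq_sum_range]
  refine (Finset.sum_subset (fun s hs => ?_) fun s hs hs' => hf s ?_).symm <;>
    simp only [Finset.mem_Ico, Finset.mem_range, not_and, not_lt] at * <;> omega

section Hessenbergian

variable (p : ℕ) (φ : ℕ → ℤ → ℝ)

/-- The entries of `Φ_{t,k}` depend on `t` and `k` only through `t - k`, so by `phiEntry_add_add`
the trailing principal submatrices of `Φ_{t,k}` are again of the form `Φ_{t,k'}`. -/
noncomputable def phiEntry (s : ℤ) (i j : ℕ) : ℝ :=
  if i + 1 = j then -1
  else if j ≤ i ∧ i - j + 1 ≤ p then φ (i - j + 1) (s + i + 1) else 0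

lemma PhiMat_apply (t : ℤ) (k : ℕ) (i j : Fin k) :
    PhiMat p φ t k i j = phiEntry p φ (t - k) i j := rfl

lemma phiEntry_add_add (s : ℤ) (c i j : ℕ) :
    phiEntry p φ s (c + i) (c + j) = phiEntry p φ (s + c) i j := by
  simp only [phiEntry, Nat.add_sub_add_left, add_assoc, Nat.add_left_cancel_iff,
    Nat.add_le_add_iff_left, Nat.cast_add]

lemma phiEntry_of_lt (s : ℤ) {i j : ℕ} (h : i < j) : phiEntry p φ s i (j + 1) = 0 := by
  simp only [phiEntry]
  rw [if_neg (by omega), if_neg (by omega)]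

lemma phiEntry_self_succ (s : ℤ) (i : ℕ) : phiEntry p φ s i (i + 1) = -1 := by
  simp [phiEntry]

lemma phiEntry_zero (s : ℤ) (i : ℕ) :
    phiEntry p φ s i 0 = if i + 1 ≤ p then φ (i + 1) (s + i + 1) else 0 := by
  simp [phiEntry]

/-- Deleting row `a` and the first column of `Φ_{t,k+1}` leaves a block lower triangular matrix
with diagonal blocks `Φ_{t,k-a}` and an `a × a` lower triangular block with `-1` on the diagonal. -/
lemma det_PhiMat_submatrix_succAbove_succ (t : ℤ) (k : ℕ) (a : Fin (k + 1)) :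
    ((PhiMat p φ t (k + 1)).submatrix a.succAbove Fin.succ).det
      = (-1) ^ (a : ℕ) * (PhiMat p φ t (k - a)).det := by
  obtain ⟨a, ha⟩ := a
  let e : Fin a ⊕ Fin (k - a) ≃ Fin k := finSumFinEquiv.trans (finCongr (by omega))
  set B := ((PhiMat p φ t (k + 1)).submatrix (Fin.succAbove ⟨a, ha⟩) Fin.succ).submatrix e e
  have row_inl (u : Fin a) : ((Fin.succAbove ⟨a, ha⟩ (e (.inl u)) : Fin (k + 1)) : ℕ) = u := by
    rw [Fin.succAbove_of_castSucc_lt _ _ (by simp [e, Fin.lt_def])]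
    simp [e]
  have row_inr (v : Fin (k - a)) :
      ((Fin.succAbove ⟨a, ha⟩ (e (.inr v)) : Fin (k + 1)) : ℕ) = (a + 1) + v := by
    rw [Fin.succAbove_of_le_castSucc _ _ (by simp [e, Fin.le_def])]
    simp [e]
    omega
  have col_inl (u : Fin a) : (((e (.inl u)).succ : Fin (k + 1)) : ℕ) = u + 1 := by simp [e]
  have col_inr (v : Fin (k - a)) : (((e (.inr v)).succ : Fin (k + 1)) : ℕ) = (a + 1) + v := by
    simp [e]
    omega
  have hB₁₁ : B.toBlocks₁₁.det = (-1) ^ a := by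
    have htri : B.toBlocks₁₁.BlockTriangular OrderDual.toDual := fun u w (huw : u < w) => by
      simp only [B, Matrix.toBlocks₁₁, Matrix.of_apply, Matrix.submatrix_apply, PhiMat_apply,
        row_inl, col_inl]
      exact phiEntry_of_lt p φ _ huw
    rw [Matrix.det_of_isLowerTriangular _ htri]
    simp only [B, Matrix.toBlocks₁₁, Matrix.of_apply, Matrix.submatrix_apply, PhiMat_apply,
      row_inl, col_inl, phiEntry_self_succ, Finset.prod_const, Finset.card_univ, Fintype.card_fin]
  have hB₁₂ : B.toBlocks₁₂ = 0 := by
    ext u v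
    simp only [B, Matrix.toBlocks₁₂, Matrix.of_apply, Matrix.submatrix_apply, PhiMat_apply,
      row_inl, col_inr, Matrix.zero_apply]
    rw [Nat.add_right_comm]
    exact phiEntry_of_lt p φ _ (by omega)
  have hB₂₂ : B.toBlocks₂₂ = PhiMat p φ t (k - a) := by
    ext v w
    simp only [B, Matrix.toBlocks₂₂, Matrix.of_apply, Matrix.submatrix_apply, PhiMat_apply,
      row_inr, col_inr, phiEntry_add_add]
    congr 1
    push_cast [Nat.cast_sub (Nat.lt_succ_iff.mp ha)]
    ring
  rw [← Matrix.det_submatrix_equiv_self e]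
  change B.det = _
  rw [← Matrix.fromBlocks_toBlocks B, hB₁₂, Matrix.det_fromBlocks_zero₁₂, hB₁₁, hB₂₂]

lemma det_PhiMat_succ (t : ℤ) (k : ℕ) :
    (PhiMat p φ t (k + 1)).det = ∑ a ∈ range (k + 1),
      (if a + 1 ≤ p then φ (a + 1) (t - k + a) else 0) * (PhiMat p φ t (k - a)).det := by
  rw [Matrix.det_succ_column_zero, ← Fin.sum_univ_eq_sum_range]
  refine Finset.sum_congr rfl fun a _ => ?_
  rw [det_PhiMat_submatrix_succAbove_succ, PhiMat_apply, Fin.val_zero, phiEntry_zero,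
    mul_left_comm, ← mul_assoc, ← mul_assoc, ← pow_add, Even.neg_one_pow ⟨_, rfl⟩, one_mul]
  congr 3
  push_cast
  ring

lemma xi_zero (t : ℤ) : xi p φ t 0 = 1 := by
  simp [xi, Matrix.det_isEmpty]

lemma xi_of_neg (t : ℤ) {k : ℤ} (hk : k < 0) : xi p φ t k = 0 := by
  simp [xi, not_le.mpr hk]

lemma xi_natCast (t : ℤ) (k : ℕ) : xi p φ t k = (PhiMat p φ t k).det := by
  simp [xi]

lemma xi_natCast_succ (t : ℤ) (n : ℕ) :
    xi p φ t (n + 1) = ∑ j ∈ Icc 1 p, φ j (t - (n + 1) + j) * xi p φ t (n + 1 - j) := by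
  let f : ℕ → ℝ := fun a => (if a + 1 ≤ p then φ (a + 1) (t - n + a) else 0) * xi p φ t (n - a)
  have lhs : xi p φ t (n + 1) = ∑ a ∈ range (n + 1), f a := by
    rw [← Nat.cast_succ, xi_natCast, det_PhiMat_succ]
    refine Finset.sum_congr rfl fun a ha => ?_
    dsimp only [f]
    rw [← Nat.cast_sub (Nat.lt_succ_iff.mp (Finset.mem_range.mp ha)), xi_natCast]
  have rhs : ∑ j ∈ Icc 1 p, φ j (t - (n + 1) + j) * xi p φ t (n + 1 - j)
      = ∑ a ∈ range p, f a := by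
    rw [sum_Icc_one_eq_sum_range]
    refine Finset.sum_congr rfl fun a ha => ?_
    dsimp only [f]
    rw [if_pos (Nat.succ_le_of_lt (Finset.mem_range.mp ha))]
    push_cast
    ring_nf
  rw [lhs, rhs]
  refine Finset.sum_range_eq_sum_range_of_eq_zero (fun a ha => ?_) (fun a ha => ?_)
  · simp only [f]
    rw [xi_of_neg p φ t (by omega), mul_zero]
  · simp only [f]
    rw [if_neg (by omega), zero_mul]

lemma xi_eq (t k : ℤ) :
    xi p φ t k = (if k = 0 then 1 else 0)
      + ∑ j ∈ Icc 1 p, φ j (t - k + j) * xi p φ t (k - j) := by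
  rcases lt_or_ge k 0 with hk | hk
  · rw [xi_of_neg p φ t hk, if_neg hk.ne, zero_add, Finset.sum_eq_zero fun j hj => ?_]
    rw [xi_of_neg p φ t (by omega), mul_zero]
  lift k to ℕ using hk
  rcases k with _ | n
  · rw [Nat.cast_zero, xi_zero, if_pos rfl, left_eq_add, Finset.sum_eq_zero fun j hj => ?_]
    rw [xi_of_neg p φ t (by have := (Finset.mem_Icc.mp hj).1; omega), mul_zero]
  · rw [Nat.cast_succ, if_neg (by omega), zero_add, xi_natCast_succ]

noncomputable def xiSplitCoeff (t : ℤ) (N m : ℕ) : ℝ :=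
  ∑ i ∈ Icc 1 (p - m), φ (m + i) (t - N + i) * xi p φ t ((N : ℤ) - i)

noncomputable def xiSplit (t : ℤ) (N : ℕ) (k : ℤ) : ℝ :=
  xi p φ t N * xi p φ (t - N) k
    + ∑ m ∈ Icc 1 (p - 1), xiSplitCoeff p φ t N m * xi p φ (t - N - m) (k - m)

lemma xiSplit_of_neg (t : ℤ) (N : ℕ) {k : ℤ} (hk : k < 0) : xiSplit p φ t N k = 0 := by
  rw [xiSplit, xi_of_neg p φ _ hk, mul_zero, zero_add]
  exact Finset.sum_eq_zero fun m _ => by rw [xi_of_neg p φ _ (by omega), mul_zero]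

lemma xiSplit_eq (t : ℤ) (N : ℕ) (k : ℤ) :
    xiSplit p φ t N k = (xi p φ t N * (if k = 0 then 1 else 0)
      + ∑ m ∈ Icc 1 (p - 1), xiSplitCoeff p φ t N m * (if k - m = 0 then 1 else 0))
      + ∑ j ∈ Icc 1 p, φ j (t - (N + k) + j) * xiSplit p φ t N (k - j) := by
  have expand : ∀ m : ℕ, xi p φ (t - N - m) (k - m) = (if k - m = 0 then 1 else 0)
      + ∑ j ∈ Icc 1 p, φ j (t - (N + k) + j) * xi p φ (t - N - m) (k - j - m) := fun m => by
    rw [xi_eq]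
    congr 1
    refine Finset.sum_congr rfl fun j _ => ?_
    congr 2 <;> ring
  have expand₀ : xi p φ (t - N) k = (if k = 0 then 1 else 0)
      + ∑ j ∈ Icc 1 p, φ j (t - (N + k) + j) * xi p φ (t - N) (k - j) := by
    rw [xi_eq]
    congr 1
    refine Finset.sum_congr rfl fun j _ => ?_
    congr 2
    ring
  rw [xiSplit, expand₀]
  simp only [expand, xiSplit, mul_add, Finset.mul_sum, Finset.sum_add_distrib]
  rw [Finset.sum_comm (s := Icc 1 (p - 1))]
  simp only [mul_left_comm]
  ring

lemma sum_Icc_filter_lt_eq_xiSplitCoeff (t : ℤ) (N s : ℕ) :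
    ∑ j ∈ Icc 1 p with s < j, φ j (t - (N + s) + j) * xi p φ t (N + s - j)
      = xiSplitCoeff p φ t N s := by
  have hfilter : (Icc 1 p).filter (s < ·) = (Icc 1 (p - s)).map (addLeftEmbedding s) := by
    ext j
    simp only [Finset.mem_filter, Finset.mem_Icc, Finset.mem_map, addLeftEmbedding_apply]
    constructor
    · exact fun h => ⟨j - s, by omega, by omega⟩
    · rintro ⟨i, hi, rfl⟩
      omega
  rw [hfilter, Finset.sum_map, xiSplitCoeff]
  refine Finset.sum_congr rfl fun i _ => ?_
  simp only [addLeftEmbedding_apply, Nat.cast_add]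
  congr 2 <;> ring

lemma xi_add (t : ℤ) (N s : ℕ) : xi p φ t (N + s) = xiSplit p φ t N s := by
  induction s using Nat.strong_induction_on with
  | _ s ih =>
  rcases Nat.eq_zero_or_pos s with rfl | hs
  · rw [xiSplit, Nat.cast_zero, add_zero, xi_zero, mul_one, left_eq_add]
    exact Finset.sum_eq_zero fun m hm => by
      rw [xi_of_neg p φ _ (by have := (Finset.mem_Icc.mp hm).1; omega), mul_zero]
  have h_ih : ∀ j ∈ Icc 1 p, xiSplit p φ t N (s - j)
      = if s < j then 0 else xi p φ t (N + s - j) := fun j hj => by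
    have hj := (Finset.mem_Icc.mp hj).1
    split_ifs with hsj
    · exact xiSplit_of_neg p φ t N (by omega)
    · rw [← Nat.cast_sub (by omega), ← ih (s - j) (by omega)]
      congr 1
      push_cast [Nat.cast_sub (not_lt.mp hsj)]
      ring
  have h_delta : ∑ m ∈ Icc 1 (p - 1), xiSplitCoeff p φ t N m * (if (s : ℤ) - m = 0 then 1 else 0)
      = xiSplitCoeff p φ t N s := by
    have hcond : ∀ m : ℕ, (s : ℤ) - m = 0 ↔ s = m := fun m => by omega
    simp only [hcond, mul_ite, mul_one, mul_zero, Finset.sum_ite_eq, Finset.mem_Icc]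
    split_ifs with h
    · rfl
    -- for `s ≥ p` the truncated subtraction `p - s = 0` makes `xiSplitCoeff` an empty sum
    · simp [xiSplitCoeff, show p - s = 0 by omega]
  have h_rhs : ∑ j ∈ Icc 1 p, φ j (t - (N + s) + j) * xiSplit p φ t N (s - j)
      = ∑ j ∈ Icc 1 p with ¬ s < j, φ j (t - (N + s) + j) * xi p φ t (N + s - j) := by
    rw [Finset.sum_filter]
    refine Finset.sum_congr rfl fun j hj => ?_
    rw [h_ih j hj]
    split_ifs <;> simp
  rw [xi_eq, xiSplit_eq, if_neg (by omega), if_neg (by omega), zero_add, mul_zero, zero_add,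
    h_delta, h_rhs, ← sum_Icc_filter_lt_eq_xiSplitCoeff, Finset.sum_filter_add_sum_filter_not]

end Hessenbergian

section PartialSums

variable {E : Type*} [AddCommGroup E] [Module ℝ E]

def maPartialSum (ψ : ℤ → ℤ → ℝ) (e : ℤ → E) (u : ℤ) (n : ℕ) : E :=
  ∑ r ∈ range n, ψ u r • e (u - r)

variable (p : ℕ) (φ : ℕ → ℤ → ℝ)

lemma maPartialSum_xi_add (e : ℤ → E) (t : ℤ) (N K : ℕ) :
    maPartialSum (xi p φ) e t (N + K) = maPartialSum (xi p φ) e t N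
      + xi p φ t N • maPartialSum (xi p φ) e (t - N) K
      + ∑ m ∈ Icc 1 (p - 1),
          xiSplitCoeff p φ t N m • maPartialSum (xi p φ) e (t - N - m) (K - m) := by
  have shifted : ∀ m : ℕ, ∑ s ∈ range K, xi p φ (t - N - m) (s - m) • e (t - N - s)
      = maPartialSum (xi p φ) e (t - N - m) (K - m) := fun m => by
    rw [Finset.sum_range_eq_sum_range_sub (m := m) (fun s hs => by
      rw [xi_of_neg p φ _ (by omega), zero_smul]) K, maPartialSum]
    refine Finset.sum_congr rfl fun s _ => ?_
    push_cast
    congr 2 <;> ring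
  rw [maPartialSum, Finset.sum_range_add, add_assoc]
  congr 1
  simp only [Nat.cast_add, xi_add, xiSplit, add_smul, mul_smul, Finset.sum_smul,
    Finset.sum_add_distrib, ← sub_sub, ← Finset.smul_sum]
  rw [Finset.sum_comm, maPartialSum]
  simp only [← Finset.smul_sum, shifted]

end PartialSums

section InnerProduct

variable {E : Type*} [NormedAddCommGroup E] [InnerProductSpace ℝ E]

lemma inner_eq_zero_of_tendsto_maPartialSum {ψ : ℤ → ℤ → ℝ} {e : ℤ → E} {u : ℤ} {x z : E}
    (hz : Tendsto (maPartialSum ψ e u) atTop (𝓝 z)) (hx : ∀ r : ℕ, ⟪x, e (u - r)⟫_ℝ = 0) :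
    ⟪x, z⟫_ℝ = 0 := by
  refine tendsto_nhds_unique (tendsto_const_nhds.inner hz) ?_
  simp [maPartialSum, inner_sum, inner_smul_right, hx]

variable (p : ℕ) (φ : ℕ → ℤ → ℝ)

theorem inner_limit_recursion {e : ℤ → E} (he : Pairwise fun a b => ⟪e a, e b⟫_ℝ = 0)
    {ζ : ℤ → E} (hζ : ∀ u, Tendsto (maPartialSum (xi p φ) e u) atTop (𝓝 (ζ u))) (t : ℤ) (N : ℕ) :
    ⟪ζ t, ζ (t - N)⟫_ℝ = xi p φ t N * ⟪ζ (t - N), ζ (t - N)⟫_ℝ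
      + ∑ m ∈ Icc 1 (p - 1), xiSplitCoeff p φ t N m * ⟪ζ (t - N), ζ (t - N - m)⟫_ℝ := by
  have hdecomp : ζ t = maPartialSum (xi p φ) e t N + xi p φ t N • ζ (t - N)
      + ∑ m ∈ Icc 1 (p - 1), xiSplitCoeff p φ t N m • ζ (t - N - m) := by
    refine tendsto_nhds_unique ((hζ t).comp (tendsto_add_atTop_nat N)) ?_
    simp only [Function.comp_def, Nat.add_comm _ N, maPartialSum_xi_add]
    exact (tendsto_const_nhds.add ((hζ _).const_smul _)).add
      (tendsto_finsetSum _ fun m _ => ((hζ _).comp (tendsto_sub_atTop_nat m)).const_smul _)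
  have horth : ⟪maPartialSum (xi p φ) e t N, ζ (t - N)⟫_ℝ = 0 := by
    rw [maPartialSum, sum_inner]
    refine Finset.sum_eq_zero fun r hr => ?_
    rw [inner_smul_left, inner_eq_zero_of_tendsto_maPartialSum (hζ (t - N))
      fun q => he (by have := Finset.mem_range.mp hr; omega), mul_zero]
  rw [hdecomp, inner_add_left, inner_add_left, horth, zero_add, inner_smul_left, sum_inner]
  simp only [inner_smul_left, RCLike.conj_to_real]
  simp only [real_inner_comm (ζ (t - N))]

end InnerProduct

section L2

variable {Ω : Type*} {m0 : MeasurableSpace Ω} {μ : Measure Ω}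

lemma integral_mul_eq_zero_of_condExp_eq_zero {m : MeasurableSpace Ω} (hm : m ≤ m0)
    [SigmaFinite (μ.trim hm)] {f g : Ω → ℝ} (hg : StronglyMeasurable[m] g)
    (hgf : Integrable (g * f) μ) (hf : Integrable f μ) (hf0 : μ[f | m] =ᵐ[μ] 0) :
    ∫ ω, g ω * f ω ∂μ = 0 := by
  have h : μ[g * f | m] =ᵐ[μ] 0 :=
    (condExp_mul_of_stronglyMeasurable_left hg hgf hf).trans (hf0.mono fun ω hω => by simp [hω])
  change ∫ ω, (g * f) ω ∂μ = 0
  rw [← integral_condExp hm, integral_congr_ae h]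
  simp

lemma MemLp.inner_toLp {f g : Ω → ℝ} (hf : MemLp f 2 μ) (hg : MemLp g 2 μ) :
    ⟪hf.toLp f, hg.toLp g⟫_ℝ = ∫ ω, f ω * g ω ∂μ := by
  rw [L2.inner_def]
  refine integral_congr_ae ?_
  filter_upwards [hf.coeFn_toLp, hg.coeFn_toLp] with ω hfω hgω
  rw [hfω, hgω, real_inner_eq_re_inner, RCLike.inner_apply, conj_trivial]
  simp [mul_comm]

lemma MemLp.toLp_finsetSum {E : Type*} [NormedAddCommGroup E] {q : ENNReal} {ι : Type*}
    (s : Finset ι) {f : ι → Ω → E} (hf : ∀ i, MemLp (f i) q μ) :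
    (memLp_finsetSum' s fun i _ => hf i).toLp (∑ i ∈ s, f i) = ∑ i ∈ s, (hf i).toLp (f i) := by
  classical
  induction s using Finset.induction_on with
  | empty => simp
  | insert i s hi ih =>
    simp only [Finset.sum_insert hi, ← ih]
    rfl

lemma tendsto_toLp_of_tendsto_integral_sq_sub {f : ℕ → Ω → ℝ} {g : Ω → ℝ}
    (hf : ∀ n, MemLp (f n) 2 μ) (hg : MemLp g 2 μ)
    (h : Tendsto (fun n => ∫ ω, (f n ω - g ω) ^ 2 ∂μ) atTop (𝓝 0)) :
    Tendsto (fun n => (hf n).toLp (f n)) atTop (𝓝 (hg.toLp g)) := by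
  have hnorm : ∀ n, ‖(hf n).toLp (f n) - hg.toLp g‖ = √(∫ ω, (f n ω - g ω) ^ 2 ∂μ) := fun n => by
    rw [← MemLp.toLp_sub, ← Real.sqrt_sq (norm_nonneg _), ← real_inner_self_eq_norm_sq,
      MemLp.inner_toLp]
    simp [sq]
  rw [tendsto_iff_norm_sub_tendsto_zero]
  simpa [hnorm] using h.sqrt

lemma tendsto_maPartialSum_toLp {ψ : ℤ → ℤ → ℝ} {ε : ℤ → Ω → ℝ} (hε : ∀ τ, MemLp (ε τ) 2 μ)
    {u : ℤ} {Z : Ω → ℝ} (hZ : MemLp Z 2 μ)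
    (h : Tendsto (fun n : ℕ =>
      ∫ ω, ((∑ r ∈ range (n + 1), ψ u r * ε (u - r) ω) - Z ω) ^ 2 ∂μ) atTop (𝓝 0)) :
    Tendsto (maPartialSum ψ (fun τ => (hε τ).toLp (ε τ)) u) atTop (𝓝 (hZ.toLp Z)) := by
  have hterm : ∀ r : ℕ, MemLp (ψ u r • ε (u - r)) 2 μ := fun r => (hε _).const_smul _
  have hsum : ∀ n, maPartialSum ψ (fun τ => (hε τ).toLp (ε τ)) u n
      = (memLp_finsetSum' (range n) fun r _ => hterm r).toLp _ := fun n => by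
    rw [maPartialSum, MemLp.toLp_finsetSum _ hterm]
    rfl
  rw [← Filter.tendsto_add_atTop_iff_nat 1]
  simp only [hsum]
  exact tendsto_toLp_of_tendsto_integral_sq_sub _ hZ (by simpa [Finset.sum_apply] using h)

lemma integral_eq_zero_of_tendsto_maPartialSum_toLp [IsFiniteMeasure μ] {ψ : ℤ → ℤ → ℝ}
    {ε : ℤ → Ω → ℝ} (hε : ∀ τ, MemLp (ε τ) 2 μ) (hε₀ : ∀ τ, ∫ ω, ε τ ω ∂μ = 0) {u : ℤ}
    {Z : Ω → ℝ} (hZ : MemLp Z 2 μ)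
    (h : Tendsto (maPartialSum ψ (fun τ => (hε τ).toLp (ε τ)) u) atTop (𝓝 (hZ.toLp Z))) :
    ∫ ω, Z ω ∂μ = 0 := by
  have hone : MemLp (fun _ => (1 : ℝ)) 2 μ := memLp_const 1
  have := inner_eq_zero_of_tendsto_maPartialSum (x := hone.toLp _) h fun r => by
    rw [MemLp.inner_toLp]
    simpa using hε₀ (u - r)
  rw [MemLp.inner_toLp] at this
  simpa using this

section MartingaleDifference

variable [IsFiniteMeasure μ] (𝓕 : Filtration ℤ m0) {ε : ℤ → Ω → ℝ}

lemma integral_eq_zero_of_condExp_pred_eq_zero (hmart : ∀ τ, μ[ε τ | 𝓕 (τ - 1)] =ᵐ[μ] 0)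
    (τ : ℤ) : ∫ ω, ε τ ω ∂μ = 0 := by
  rw [← integral_condExp (𝓕.le (τ - 1)), integral_congr_ae (hmart τ)]
  simp

lemma integral_mul_eq_zero_of_condExp_pred_eq_zero
    (hmeas : ∀ τ, StronglyMeasurable[𝓕 τ] (ε τ)) (hL2 : ∀ τ, MemLp (ε τ) 2 μ)
    (hmart : ∀ τ, μ[ε τ | 𝓕 (τ - 1)] =ᵐ[μ] 0) {a b : ℤ} (hab : a < b) :
    ∫ ω, ε a ω * ε b ω ∂μ = 0 :=
  integral_mul_eq_zero_of_condExp_eq_zero (𝓕.le (b - 1)) ((hmeas a).mono (𝓕.mono (by omega)))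
    ((hL2 a).integrable_mul (hL2 b)) ((hL2 b).integrable one_le_two) (hmart b)

lemma pairwise_inner_toLp_eq_zero_of_condExp_pred_eq_zero
    (hmeas : ∀ τ, StronglyMeasurable[𝓕 τ] (ε τ)) (hL2 : ∀ τ, MemLp (ε τ) 2 μ)
    (hmart : ∀ τ, μ[ε τ | 𝓕 (τ - 1)] =ᵐ[μ] 0) :
    Pairwise fun a b => ⟪(hL2 a).toLp (ε a), (hL2 b).toLp (ε b)⟫_ℝ = 0 := fun a b hab => by
  rcases hab.lt_or_gt with h | h
  · rw [MemLp.inner_toLp]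
    exact integral_mul_eq_zero_of_condExp_pred_eq_zero 𝓕 hmeas hL2 hmart h
  · rw [real_inner_comm, MemLp.inner_toLp]
    exact integral_mul_eq_zero_of_condExp_pred_eq_zero 𝓕 hmeas hL2 hmart h

end MartingaleDifference

end L2

theorem ma_infinity_autocovariance_recursion_general
    (p : ℕ) (φ : ℕ → ℤ → ℝ)
    {Ω : Type*} {m0 : MeasurableSpace Ω} {μ : Measure Ω} [IsProbabilityMeasure μ]
    (𝓕 : Filtration ℤ m0)
    (ε : ℤ → Ω → ℝ)
    (hεmeas : ∀ τ : ℤ, StronglyMeasurable[𝓕 τ] (ε τ))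
    (hεL2 : ∀ τ : ℤ, MemLp (ε τ) 2 μ)
    (hεmart : ∀ τ : ℤ, μ[ε τ | 𝓕 (τ - 1)] =ᵐ[μ] 0)
    (mu : ℤ → ℝ)
    (Z : ℤ → Ω → ℝ)
    (hZL2 : ∀ t : ℤ, MemLp (Z t) 2 μ)
    (hZ : ∀ t : ℤ, Tendsto (fun n : ℕ =>
        ∫ ω, ((∑ r ∈ Finset.range (n + 1), xi p φ t r * ε (t - r) ω) - Z t ω) ^ 2 ∂μ)
      atTop (nhds 0))
    (Y : ℤ → Ω → ℝ)
    (hY : ∀ t : ℤ, ∀ ω, Y t ω = mu t + Z t ω)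
    (t : ℤ) (N : ℕ) :
    ∫ ω, (Y t ω - ∫ x, Y t x ∂μ) * (Y (t - N) ω - ∫ x, Y (t - N) x ∂μ) ∂μ
      = xi p φ t N * ∫ ω, (Y (t - N) ω - ∫ x, Y (t - N) x ∂μ) ^ 2 ∂μ
        + ∑ m ∈ Finset.Icc 1 (p - 1), ∑ i ∈ Finset.Icc 1 (p - m),
            φ (m + i) (t - N + i) * xi p φ t ((N : ℤ) - i)
              * ∫ ω, (Y (t - N) ω - ∫ x, Y (t - N) x ∂μ)
                  * (Y (t - N - m) ω - ∫ x, Y (t - N - m) x ∂μ) ∂μ := by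
  let e : ℤ → Lp ℝ 2 μ := fun τ => (hεL2 τ).toLp (ε τ)
  let ζ : ℤ → Lp ℝ 2 μ := fun u => (hZL2 u).toLp (Z u)
  have hζ : ∀ u, Tendsto (maPartialSum (xi p φ) e u) atTop (𝓝 (ζ u)) := fun u =>
    tendsto_maPartialSum_toLp hεL2 (hZL2 u) (hZ u)
  have he : Pairwise fun a b => ⟪e a, e b⟫_ℝ = 0 :=
    pairwise_inner_toLp_eq_zero_of_condExp_pred_eq_zero 𝓕 hεmeas hεL2 hεmart
  have hcentered : ∀ u ω, Y u ω - ∫ x, Y u x ∂μ = Z u ω := fun u ω => by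
    have hZ₀ := integral_eq_zero_of_tendsto_maPartialSum_toLp hεL2
      (integral_eq_zero_of_condExp_pred_eq_zero 𝓕 hεmart) (hZL2 u) (hζ u)
    rw [integral_congr_ae (ae_of_all _ (hY u)), integral_add (integrable_const _)
      ((hZL2 u).integrable one_le_two), hZ₀, hY u]
    simp
  have hcov : ∀ a b, ∫ ω, (Y a ω - ∫ x, Y a x ∂μ) * (Y b ω - ∫ x, Y b x ∂μ) ∂μ = ⟪ζ a, ζ b⟫_ℝ :=
    fun a b => by simp only [hcentered, ζ, MemLp.inner_toLp]
  simp only [sq, hcov]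
  rw [inner_limit_recursion p φ he hζ t N]
  simp only [xiSplitCoeff, Finset.sum_mul]

/-- Under Assumption 1, the autocovariances of the MA(∞) process satisfy the recursion
`Cov(Y_t, Y_{t−N}) = ξ_{t,N} Var(Y_{t−N})
  + Σ_{m=1}^{p−1} Σ_{i=1}^{p−m} φ_{m+i}(t−N+i) ξ_{t,N−i} Cov(Y_{t−N}, Y_{t−N−m})`. -/
theorem ma_infinity_autocovariance_recursion
    (p : ℕ) (hp : 1 ≤ p) (φ : ℕ → ℤ → ℝ)
    {Ω : Type*} {m0 : MeasurableSpace Ω} {μ : Measure Ω} [IsProbabilityMeasure μ]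
    (𝓕 : Filtration ℤ m0)
    (ε : ℤ → Ω → ℝ)
    (hεmeas : ∀ τ : ℤ, StronglyMeasurable[𝓕 τ] (ε τ))
    (hεL2 : ∀ τ : ℤ, MemLp (ε τ) 2 μ)
    (hεmart : ∀ τ : ℤ, μ[ε τ | 𝓕 (τ - 1)] =ᵐ[μ] 0)
    (hA1 : ∀ r : ℕ, BddAbove (Set.range fun τ : ℤ =>
      (xi p φ τ r) ^ 2 * ∫ ω, (ε (τ - r) ω) ^ 2 ∂μ))
    (hA2 : Summable fun r : ℕ => ⨆ τ : ℤ,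
      (xi p φ τ r) ^ 2 * ∫ ω, (ε (τ - r) ω) ^ 2 ∂μ)
    (mu : ℤ → ℝ)
    (hmu : ∀ t : ℤ, Tendsto
      (fun n : ℕ => ∑ r ∈ Finset.range (n + 1), xi p φ t r * φ 0 (t - r))
      atTop (nhds (mu t)))
    (Z : ℤ → Ω → ℝ)
    (hZL2 : ∀ t : ℤ, MemLp (Z t) 2 μ)
    (hZ : ∀ t : ℤ, Tendsto (fun n : ℕ =>
        ∫ ω, ((∑ r ∈ Finset.range (n + 1), xi p φ t r * ε (t - r) ω) - Z t ω) ^ 2 ∂μ)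
      atTop (nhds 0))
    (Y : ℤ → Ω → ℝ)
    (hY : ∀ t : ℤ, ∀ ω, Y t ω = mu t + Z t ω)
    (t : ℤ) (N : ℕ) (hN : 1 ≤ N) :
    ∫ ω, (Y t ω - ∫ x, Y t x ∂μ) * (Y (t - N) ω - ∫ x, Y (t - N) x ∂μ) ∂μ
      = xi p φ t N * ∫ ω, (Y (t - N) ω - ∫ x, Y (t - N) x ∂μ) ^ 2 ∂μ
        + ∑ m ∈ Finset.Icc 1 (p - 1), ∑ i ∈ Finset.Icc 1 (p - m),
            φ (m + i) (t - N + i) * xi p φ t ((N : ℤ) - i)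
              * ∫ ω, (Y (t - N) ω - ∫ x, Y (t - N) x ∂μ)
                  * (Y (t - N - m) ω - ∫ x, Y (t - N - m) x ∂μ) ∂μ :=
  ma_infinity_autocovariance_recursion_general p φ 𝓕 ε hεmeas hεL2 hεmart mu Z hZL2 hZ Y hY t N
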